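/- Let A ⟶f B ⟶g C ⟶h A⟦1⟧ be a distinguished triangle in C. If f factors through an object of N and C belongs to N, then B belongs to N. -/

import Mathlib

open CategoryTheory CategoryTheory.Limits CategoryTheory.Pretriangulated

universe v u v₂ u₂

variable {C : Type u} [Category.{v} C] [Preadditive C] [HasZeroObject C]
  [HasShift C ℤ] [∀ n : ℤ, (shiftFunctor C n).Additive] [Pretriangulated C]

/-- `f : X ⟶ Y` factors through an object of `N`. -/
def FactorsThru (N : Set C) {X Y : C} (f : X ⟶ Y) : Prop :=
  ∃ (Z : C) (_ : Z ∈ N) (u : X ⟶ Z) (v : Z ⟶ Y), f = u ≫ v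

/-- The morphism `X⟦-1⟧ ⟶ A` obtained from `h : X ⟶ A⟦1⟧` by shifting by `-1` and
composing with the canonical isomorphism `A⟦1⟧⟦-1⟧ ≅ A`. -/
noncomputable def descShift {X A : C} (h : X ⟶ A⟦(1:ℤ)⟧) : X⟦(-1:ℤ)⟧ ⟶ A :=
  h⟦(-1:ℤ)⟧' ≫ (shiftEquiv C (1:ℤ)).unitIso.inv.app A

/-- The class `S_N` of morphisms fitting in a distinguished triangle whose two other
maps factor through `N`. -/
def SN (N : Set C) {B C₀ : C} (g : B ⟶ C₀) : Prop :=
  ∃ (A : C) (f : A ⟶ B) (h : C₀ ⟶ A⟦(1:ℤ)⟧),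
    (Triangle.mk f g h ∈ distTriang C) ∧ FactorsThru N f ∧ FactorsThru N h

/-- The class `L`. -/
def ClassL (N : Set C) {A B : C} (f : A ⟶ B) : Prop :=
  ∃ (N₀ : C) (_ : N₀ ∈ N) (g : B ⟶ N₀) (h : N₀ ⟶ A⟦(1:ℤ)⟧),
    (Triangle.mk f g h ∈ distTriang C) ∧ FactorsThru N (descShift h)

/-- The class `R`. -/
def ClassR (N : Set C) {B C₀ : C} (g : B ⟶ C₀) : Prop :=
  ∃ (N₀ : C) (_ : N₀ ∈ N) (f : N₀ ⟶ B) (h : C₀ ⟶ N₀⟦(1:ℤ)⟧),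
    (Triangle.mk f g h ∈ distTriang C) ∧ FactorsThru N h

/-- Condition (Lex) on a morphism `h : C₀ ⟶ A⟦1⟧`. -/
def LexCond (N : Set C) {C₀ A : C} (h : C₀ ⟶ A⟦(1:ℤ)⟧) : Prop :=
  ∀ (N₀ : C), N₀ ∈ N → ∀ (x : N₀ ⟶ C₀), FactorsThru N (descShift (x ≫ h))

/-- Condition (Rex) on a morphism `h : C₀ ⟶ A⟦1⟧`. -/
def RexCond (N : Set C) {C₀ A : C} (h : C₀ ⟶ A⟦(1:ℤ)⟧) : Prop :=
  ∀ (N₀ : C), N₀ ∈ N → ∀ (y : A ⟶ N₀),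
    ∃ (M : C) (_ : M ∈ N) (u : C₀⟦(-1:ℤ)⟧ ⟶ M⟦(-1:ℤ)⟧) (v : M⟦(-1:ℤ)⟧ ⟶ N₀),
      descShift h ≫ y = u ≫ v

/-- `S_N` as a morphism property. -/
def SNProp (N : Set C) : MorphismProperty C := fun _ _ g => SN N g

/-! Write `f = u ≫ v` through `Z ∈ N` and complete `h ≫ u⟦1⟧' : C₀ ⟶ Z⟦1⟧` to a distinguished
triangle `Z ⟶ M ⟶ C₀ ⟶ Z⟦1⟧`, so that `M ∈ N` by closure under extensions. Completing
`(u, 𝟙 C₀)` to a morphism of triangles gives `φ : B ⟶ M`, and `v` extends along `Z ⟶ M` to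
`ψ : M ⟶ B` because `h ≫ f⟦1⟧' = 0`. Then `f ≫ φ ≫ ψ = f`, so `𝟙 B - φ ≫ ψ` factors through `g`
and `B` is a retract of `M ⊞ C₀`. -/

namespace CategoryTheory.Pretriangulated

section

variable (T : Triangle C) (hT : T ∈ distTriang C)
include hT

lemma distTriang_yoneda_exact₁ {X : C} (f : T.obj₁ ⟶ X) (hf : T.mor₃ ≫ f⟦(1 : ℤ)⟧' = 0) :
    ∃ g : T.obj₂ ⟶ X, f = T.mor₁ ≫ g := by
  obtain ⟨g, hg, -⟩ := complete_distinguished_triangle_morphism₂ T _ hT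
    (contractible_distinguished X) f 0 (hf.trans zero_comp.symm)
  exact ⟨g, (Category.comp_id f).symm.trans hg.symm⟩

lemma nonempty_retract_biprod_of_distTriang {M : C} (φ : T.obj₂ ⟶ M) (ψ : M ⟶ T.obj₂)
    (hφψ : T.mor₁ ≫ φ ≫ ψ = T.mor₁) : Nonempty (Retract T.obj₂ (M ⊞ T.obj₃)) := by
  obtain ⟨s, hs⟩ := Triangle.yoneda_exact₂ T hT (𝟙 _ - φ ≫ ψ)
    (by simp [Preadditive.comp_sub, hφψ])
  exact ⟨{ i := biprod.lift φ T.mor₂, r := biprod.desc ψ s,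
           retract := by rw [biprod.lift_desc, ← hs]; abel }⟩

end

lemma exists_comp_comp_eq_of_factorization {A B C₀ Z M : C} {f : A ⟶ B} {g : B ⟶ C₀}
    {h : C₀ ⟶ A⟦(1 : ℤ)⟧} (hT : Triangle.mk f g h ∈ distTriang C) {u : A ⟶ Z} {v : Z ⟶ B}
    (huv : f = u ≫ v) {m : Z ⟶ M} {p : M ⟶ C₀}
    (hT' : Triangle.mk m p (h ≫ u⟦(1 : ℤ)⟧') ∈ distTriang C) :
    ∃ (φ : B ⟶ M) (ψ : M ⟶ B), f ≫ φ ≫ ψ = f := by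
  obtain ⟨φ, hφ, -⟩ : ∃ φ : B ⟶ M, f ≫ φ = u ≫ m ∧ _ :=
    complete_distinguished_triangle_morphism₂ _ _ hT hT' u (𝟙 C₀) (Category.id_comp _).symm
  obtain ⟨ψ, hψ⟩ : ∃ ψ : M ⟶ B, v = m ≫ ψ := distTriang_yoneda_exact₁ _ hT' v (by
    show (h ≫ u⟦(1 : ℤ)⟧') ≫ v⟦(1 : ℤ)⟧' = 0
    rw [Category.assoc, ← Functor.map_comp, ← huv]
    exact comp_distTriang_mor_zero₃₁ _ hT)
  exact ⟨φ, ψ, by rw [← Category.assoc, hφ, Category.assoc, ← hψ, huv]⟩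

end CategoryTheory.Pretriangulated

theorem stmt0 (N : Set C)
    (hNsum : ∀ ⦃X Z : C⦄ (i : X ⟶ Z) (r : Z ⟶ X), i ≫ r = 𝟙 X → Z ∈ N → X ∈ N)
    (hNext : ∀ (T : Triangle C), (T ∈ distTriang C) → T.obj₁ ∈ N → T.obj₃ ∈ N → T.obj₂ ∈ N)
    {A B C₀ : C} (f : A ⟶ B) (g : B ⟶ C₀) (h : C₀ ⟶ A⟦(1:ℤ)⟧)
    (hT : Triangle.mk f g h ∈ distTriang C)
    (hf : FactorsThru N f) (hC : C₀ ∈ N) :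
    B ∈ N := by
  obtain ⟨Z, hZ, u, v, huv⟩ := hf
  obtain ⟨M, m, p, hT'⟩ := distinguished_cocone_triangle₂ (h ≫ u⟦(1 : ℤ)⟧')
  have hM : M ∈ N := hNext _ hT' hZ hC
  obtain ⟨φ, ψ, hφψ⟩ := exists_comp_comp_eq_of_factorization hT huv hT'
  obtain ⟨e⟩ := nonempty_retract_biprod_of_distTriang _ hT φ ψ hφψ
  exact hNsum e.i e.r e.retract (hNext _ (binaryBiproductTriangle_distinguished M C₀) hM hC)
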